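/- arXiv:2512.17195 — 3 statements merged into one kernel-verified Lean document; each statement's English description precedes it below -/
import Mathlib

section
/- For all real x ≥ 3, the modified Bessel function of the first kind of order -1 satisfies (1/10)·e^x/√x < I_{-1}(x) < √(π/8)·e^x/√x. -/
/-! The `(m+1)`-st term of the series is `x^(2m+1)/(2m+1)! · r (m+1)` with `r n = C(2n,n)/4^n`,
and `1/(4n) ≤ (r n)^2 ≤ 1/(3n+1)`. Write `s = √x`. By AM–GM the upper estimate gives
`r (m+1) ≤ 1/(2s) + s/(6(m+1))`, so the series is dominated termwise by that of
`sinh x/(2s) + (cosh x - 1)/(3s) ≤ (5/12) e^x/s`. The lower estimate gives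
`r (m+1) ≥ s/(2m+1+x)`, and Cauchy–Schwarz against `∑ (2m+1+x) x^(2m+1)/(2m+1)! = x e^x` bounds
`∑ x^(2m+1)/((2m+1)! (2m+1+x))` below by `sinh² x/(x e^x)`; for `x ≥ 2`, `sinh x > e^x/3`. -/

open Real

/-- The modified Bessel function of the first kind of order `-1`:
`I_{-1}(x) = ∑_{m≥0} (1/(m! Γ(m))) (x/2)^{2m-1}` (the `m = 0` term vanishes since
`1/Γ(0) = 0`). -/
noncomputable def besselINegOne (x : ℝ) : ℝ :=
  ∑' m : ℕ, (1 / ((m.factorial : ℝ) * Real.Gamma m)) * (x / 2) ^ (2 * (m : ℤ) - 1)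

namespace Nat

theorem three_mul_add_one_mul_centralBinom_sq_le (n : ℕ) :
    (3 * n + 1) * centralBinom n ^ 2 ≤ 16 ^ n := by
  induction n with
  | zero => simp
  | succ n ih =>
    refine Nat.le_of_mul_le_mul_left ?_ (by positivity : 0 < (n + 1) ^ 2)
    calc (n + 1) ^ 2 * ((3 * (n + 1) + 1) * centralBinom (n + 1) ^ 2)
        = (3 * n + 4) * ((n + 1) * centralBinom (n + 1)) ^ 2 := by ring
      _ = 4 * (3 * n + 4) * (2 * n + 1) ^ 2 * centralBinom n ^ 2 := by
          rw [succ_mul_centralBinom_succ]; ring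
      _ ≤ 16 * (n + 1) ^ 2 * (3 * n + 1) * centralBinom n ^ 2 :=
          Nat.mul_le_mul_right _ (by nlinarith)
      _ = (n + 1) ^ 2 * (16 * ((3 * n + 1) * centralBinom n ^ 2)) := by ring
      _ ≤ (n + 1) ^ 2 * (16 * 16 ^ n) := by gcongr
      _ = (n + 1) ^ 2 * 16 ^ (n + 1) := by ring

theorem sixteen_pow_le_four_mul_mul_centralBinom_sq {n : ℕ} (hn : n ≠ 0) :
    16 ^ n ≤ 4 * n * centralBinom n ^ 2 := by
  induction n with
  | zero => exact absurd rfl hn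
  | succ n ih =>
    rcases eq_or_ne n 0 with rfl | hn
    · decide
    refine Nat.le_of_mul_le_mul_left ?_ (by positivity : 0 < n + 1)
    calc (n + 1) * 16 ^ (n + 1) = 16 * (n + 1) * 16 ^ n := by ring
      _ ≤ 16 * (n + 1) * (4 * n * centralBinom n ^ 2) := by gcongr; exact ih hn
      _ = 64 * n * (n + 1) * centralBinom n ^ 2 := by ring
      _ ≤ 4 * (2 * (2 * n + 1)) ^ 2 * centralBinom n ^ 2 :=
          Nat.mul_le_mul_right _ (by nlinarith)
      _ = 4 * (2 * (2 * n + 1) * centralBinom n) ^ 2 := by ring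
      _ = 4 * ((n + 1) * centralBinom (n + 1)) ^ 2 := by rw [succ_mul_centralBinom_succ]
      _ = (n + 1) * (4 * (n + 1) * centralBinom (n + 1) ^ 2) := by ring


theorem centralBinom_succ_mul_factorial_mul_factorial (m : ℕ) :
    centralBinom (m + 1) * (m ! * (m + 1)!) = 2 * (2 * m + 1)! := by
  have h := add_choose_mul_factorial_mul_factorial (m + 1) m
  rw [centralBinom_eq_two_mul_choose, two_mul, ← add_assoc, choose_succ_succ' (m + 1 + m) m,
    choose_symm_add, ← two_mul, show m + 1 + m = 2 * m + 1 by ring] at *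
  rw [← h]; ring

theorem three_mul_add_one_mul_centralBinom_div_four_pow_sq_le (n : ℕ) :
    (3 * n + 1 : ℝ) * (centralBinom n / 4 ^ n) ^ 2 ≤ 1 := by
  rw [div_pow, ← pow_mul, mul_comm n 2, pow_mul, ← mul_div_assoc, div_le_one (by positivity)]
  exact_mod_cast three_mul_add_one_mul_centralBinom_sq_le n

theorem one_le_four_mul_mul_centralBinom_div_four_pow_sq {n : ℕ} (hn : n ≠ 0) :
    1 ≤ 4 * n * (centralBinom n / 4 ^ n : ℝ) ^ 2 := by
  rw [div_pow, ← pow_mul, mul_comm n 2, pow_mul, ← mul_div_assoc, one_le_div (by positivity)]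
  exact_mod_cast sixteen_pow_le_four_mul_mul_centralBinom_sq hn

theorem centralBinom_div_four_pow_le {n : ℕ} (hn : n ≠ 0) {s : ℝ} (hs : 0 < s) :
    centralBinom n / 4 ^ n ≤ 1 / (2 * s) + s / (6 * n) := by
  have hr := three_mul_add_one_mul_centralBinom_div_four_pow_sq_le n
  have hn : (0 : ℝ) < n := by positivity
  rw [div_add_div _ _ (by positivity) (by positivity), le_div_iff₀ (by positivity)]
  nlinarith [sq_nonneg (s - 3 * n * (centralBinom n / 4 ^ n : ℝ))]

theorem le_centralBinom_div_four_pow_mul {n : ℕ} (hn : n ≠ 0) (s : ℝ) :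
    s ≤ centralBinom n / 4 ^ n * (n + s ^ 2) := by
  have hr := one_le_four_mul_mul_centralBinom_div_four_pow_sq hn
  have hr0 : (0 : ℝ) < centralBinom n / 4 ^ n :=
    _root_.div_pos (mod_cast centralBinom_pos n) (by positivity)
  nlinarith [sq_nonneg (2 * (centralBinom n / 4 ^ n : ℝ) * s - 1)]

end Nat

open Nat

theorem HasSum.sq_div_le {ι : Type*} {f g : ι → ℝ} {a b c : ℝ} (hf : HasSum f a)
    (hg : HasSum g b) (hfg : HasSum (fun i ↦ f i ^ 2 / g i) c) (hg0 : ∀ i, 0 < g i) :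
    a ^ 2 / b ≤ c := by
  rcases eq_or_ne b 0 with rfl | hb
  · rw [div_zero]
    exact hfg.nonneg fun i ↦ div_nonneg (sq_nonneg _) (hg0 i).le
  exact le_of_tendsto_of_tendsto' ((hf.pow 2).div hg hb) hfg
    fun s ↦ Finset.sq_sum_div_le_sum_sq_div s f fun i _ ↦ hg0 i

namespace Real

theorem hasSum_cosh_sub_one (x : ℝ) :
    HasSum (fun n ↦ x ^ (2 * n + 2) / (2 * n + 2)!) (cosh x - 1) := by
  simpa [mul_add] using (hasSum_nat_add_iff' 1).2 (hasSum_cosh x)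

theorem hasSum_mul_exp_of_sinh_series (x : ℝ) :
    HasSum (fun n ↦ (2 * n + 1 + x) * (x ^ (2 * n + 1) / (2 * n + 1)!)) (x * exp x) := by
  rw [← cosh_add_sinh, mul_add]
  refine (((hasSum_cosh x).mul_left x).add ((hasSum_sinh x).mul_left x)).congr_fun fun n ↦ ?_
  rw [factorial_succ, pow_succ]
  push_cast
  field_simp

theorem exp_div_three_lt_sinh {x : ℝ} (hx : 2 ≤ x) : exp x / 3 < sinh x := by
  have h1 : exp (-x) < 1 := exp_lt_one_iff.2 (by linarith)
  have h2 : x + 1 ≤ exp x := add_one_le_exp x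
  rw [sinh_eq]
  linarith

end Real

theorem div_two_pow_div_factorial_mul_factorial (x : ℝ) (m : ℕ) :
    (x / 2) ^ (2 * m + 1) / (m ! * (m + 1)!) =
      x ^ (2 * m + 1) / (2 * m + 1)! * (centralBinom (m + 1) / 4 ^ (m + 1)) := by
  have h : ((2 * m + 1)! : ℝ) = centralBinom (m + 1) * (m ! * (m + 1)!) / 2 := by
    rw [eq_div_iff two_ne_zero, mul_comm]
    exact_mod_cast (centralBinom_succ_mul_factorial_mul_factorial m).symm
  have h4 : (4 : ℝ) ^ (m + 1) = 2 * 2 ^ (2 * m + 1) := by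
    rw [pow_succ, pow_succ, pow_mul]; ring
  have hc : (centralBinom (m + 1) : ℝ) ≠ 0 := mod_cast centralBinom_ne_zero _
  rw [div_pow, h4, h]
  field_simp

theorem besselINegOne_eq_tsum (x : ℝ) :
    besselINegOne x = ∑' m : ℕ, (x / 2) ^ (2 * m + 1) / (m ! * (m + 1)!) := by
  rw [besselINegOne, ← succ_injective.tsum_eq]
  · refine tsum_congr fun m ↦ ?_
    have hexp : 2 * ((m + 1 : ℕ) : ℤ) - 1 = (2 * m + 1 : ℕ) := by push_cast; ring
    rw [succ_eq_add_one, cast_succ, Gamma_nat_eq_factorial, hexp, zpow_natCast]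
    ring
  · rintro (_ | m) hm
    · simp at hm
    · exact ⟨m, rfl⟩

theorem hasSum_besselINegOne (x : ℝ) :
    HasSum (fun m : ℕ ↦ x ^ (2 * m + 1) / (2 * m + 1)! * (centralBinom (m + 1) / 4 ^ (m + 1)))
      (besselINegOne x) := by
  simp_rw [besselINegOne_eq_tsum, div_two_pow_div_factorial_mul_factorial]
  refine Summable.hasSum <| (hasSum_sinh |x|).summable.of_norm_bounded fun m ↦ ?_
  rw [norm_mul, norm_div, norm_pow, Real.norm_eq_abs, norm_natCast]
  refine mul_le_of_le_one_right (by positivity) ?_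
  rw [norm_div, norm_pow, norm_natCast, Real.norm_ofNat, div_le_one (by positivity)]
  exact_mod_cast centralBinom_le_four_pow (m + 1)

theorem besselINegOne_le {x : ℝ} (hx : 0 < x) : besselINegOne x ≤ 5 / 12 * (exp x / √x) := by
  have hs : 0 < √x := sqrt_pos.2 hx
  have hterm : ∀ m : ℕ,
      x ^ (2 * m + 1) / (2 * m + 1)! * (centralBinom (m + 1) / 4 ^ (m + 1)) ≤
        x ^ (2 * m + 1) / (2 * m + 1)! / (2 * √x) +
          x ^ (2 * m + 2) / (2 * m + 2)! / (3 * √x) := by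
    intro m
    calc x ^ (2 * m + 1) / (2 * m + 1)! * (centralBinom (m + 1) / 4 ^ (m + 1))
        ≤ x ^ (2 * m + 1) / (2 * m + 1)! * (1 / (2 * √x) + √x / (6 * (m + 1 : ℕ))) := by
          gcongr
          exact centralBinom_div_four_pow_le (succ_ne_zero m) hs
      _ = _ := by
          rw [show (2 * m + 2)! = (2 * m + 2) * (2 * m + 1)! from factorial_succ _, pow_succ]
          push_cast
          field_simp
          rw [sq_sqrt hx.le]
          ring
  have hsum := ((hasSum_sinh x).div_const (2 * √x)).add
    ((hasSum_cosh_sub_one x).div_const (3 * √x))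
  calc besselINegOne x ≤ sinh x / (2 * √x) + (cosh x - 1) / (3 * √x) :=
        hasSum_le hterm (hasSum_besselINegOne x) hsum
    _ = (sinh x / 2 + (cosh x - 1) / 3) / √x := by ring
    _ ≤ 5 / 12 * exp x / √x := by
        gcongr
        rw [sinh_eq, cosh_eq]
        linarith [exp_pos (-x)]
    _ = 5 / 12 * (exp x / √x) := by ring

theorem sqrt_mul_sinh_sq_div_le_besselINegOne {x : ℝ} (hx : 0 < x) :
    √x * (sinh x ^ 2 / (x * exp x)) ≤ besselINegOne x := by
  set c : ℕ → ℝ := fun m ↦ x ^ (2 * m + 1) / (2 * m + 1)!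
  set w : ℕ → ℝ := fun m ↦ 2 * m + 1 + x
  have hc : ∀ m, 0 < c m := fun m ↦ by positivity
  have hw : ∀ m, 0 < w m := fun m ↦ by positivity
  have hcw : Summable fun m ↦ c m / w m :=
    (hasSum_sinh x).summable.of_nonneg_of_le (fun m ↦ (div_pos (hc m) (hw m)).le)
      fun m ↦ div_le_self (hc m).le <| by
        simp only [w]
        linarith [(m.cast_nonneg : (0 : ℝ) ≤ m)]
  have hcauchy : sinh x ^ 2 / (x * exp x) ≤ ∑' m, c m / w m :=
    (hasSum_sinh x).sq_div_le (hasSum_mul_exp_of_sinh_series x)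
      (hcw.hasSum.congr_fun fun m ↦ by rw [sq, mul_comm (w m), mul_div_mul_left _ _ (hc m).ne'])
      fun m ↦ mul_pos (hw m) (hc m)
  have hterm : ∀ m, √x * (c m / w m) ≤ c m * (centralBinom (m + 1) / 4 ^ (m + 1)) := by
    intro m
    have hr := le_centralBinom_div_four_pow_mul (succ_ne_zero m) √x
    rw [sq_sqrt hx.le] at hr
    have hsw : √x / w m ≤ centralBinom (m + 1) / 4 ^ (m + 1) := by
      rw [div_le_iff₀ (hw m)]
      refine hr.trans (mul_le_mul_of_nonneg_left ?_ (by positivity))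
      simp only [w]
      push_cast
      linarith [(m.cast_nonneg : (0 : ℝ) ≤ m)]
    calc √x * (c m / w m) = c m * (√x / w m) := by ring
      _ ≤ _ := mul_le_mul_of_nonneg_left hsw (hc m).le
  calc √x * (sinh x ^ 2 / (x * exp x)) ≤ √x * ∑' m, c m / w m := by gcongr
    _ = ∑' m, √x * (c m / w m) := tsum_mul_left.symm
    _ ≤ besselINegOne x := hasSum_le hterm (hcw.mul_left √x).hasSum (hasSum_besselINegOne x)

theorem besselINegOne_bounds (x : ℝ) (hx : 3 ≤ x) :
    (1 / 10) * (Real.exp x / Real.sqrt x) < besselINegOne x ∧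
      besselINegOne x < Real.sqrt (π / 8) * (Real.exp x / Real.sqrt x) := by
  have hx0 : 0 < x := by linarith
  have hs : 0 < √x := sqrt_pos.2 hx0
  constructor
  · have hsinh := exp_div_three_lt_sinh (by linarith : 2 ≤ x)
    have hexp := exp_pos x
    calc 1 / 10 * (exp x / √x) = exp x ^ 2 / 10 / (√x * exp x) := by field_simp
      _ < sinh x ^ 2 / (√x * exp x) := by gcongr; nlinarith
      _ = √x * (sinh x ^ 2 / (x * exp x)) := by
          field_simp
          rw [sq_sqrt hx0.le]
      _ ≤ besselINegOne x := sqrt_mul_sinh_sq_div_le_besselINegOne hx0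
  · calc besselINegOne x ≤ 5 / 12 * (exp x / √x) := besselINegOne_le hx0
      _ < √(π / 8) * (exp x / √x) := by
          gcongr
          rw [lt_sqrt (by norm_num)]
          linarith [pi_gt_three]
end

section
/- Let m, r, h, k be positive integers with 0 ≤ h < k, gcd(h,k)=1, 1 ≤ r ≤ m-1. Set d = gcd(m,k), m = d·m', k = d·k', and let ħ be an integer with ħ·m'·h ≡ -1 (mod k'), and b = (ħ·m'·h + 1)/k'. If d divides r·h, then the rational number b·r/(d·m') is not an integer. -/
/-- If `d = gcd(m,k)`, `m = d·m'`, `k = d·k'`, `hbar·m'·h ≡ -1 (mod k')` with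
`b = (hbar·m'·h + 1)/k'`, `1 ≤ r ≤ m - 1`, `gcd(h,k) = 1`, and `d ∣ r·h`, then `b·r/(d·m')`
is not an integer, i.e. `d·m'` does not divide `b·r`. -/
theorem br_not_divisible (m r h k d m' k' : ℕ) (hbar b : ℤ)
    (hm : 0 < m) (hk : 0 < k) (hr : 1 ≤ r) (hrm : r ≤ m - 1)
    (hhk : h < k) (hcop : Nat.gcd h k = 1)
    (hd : d = Nat.gcd m k) (hm' : m = d * m') (hk' : k = d * k')
    (hb : hbar * (m' : ℤ) * (h : ℤ) + 1 = b * (k' : ℤ))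
    (hdvd : (d : ℤ) ∣ (r : ℤ) * (h : ℤ)) :
    ¬ ((d : ℤ) * (m' : ℤ) ∣ b * (r : ℤ)) := by
  intro hdiv
  -- d divides k
  have hdk : d ∣ k := hd ▸ Nat.gcd_dvd_right m k
  -- d coprime to h
  have hcopdh : Nat.Coprime d h := by
    have : Nat.Coprime h d := Nat.Coprime.coprime_dvd_right hdk hcop
    exact this.symm
  -- d ∣ r in ℕ
  have hdr : d ∣ r := by
    have : (d : ℤ) ∣ (r : ℤ) := by
      have := (Int.isCoprime_iff_gcd_eq_one.mpr (by
        simpa [Int.gcd_natCast_natCast] using hcopdh)).dvd_of_dvd_mul_right hdvd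
      exact this
    exact_mod_cast this
  obtain ⟨s, hs⟩ := hdr
  have hd0 : 0 < d := by
    rcases Nat.eq_zero_or_pos d with h0 | h0
    · subst h0; simp at hm'; omega
    · exact h0
  -- b coprime to m'
  have hcopbm : IsCoprime b (m' : ℤ) := by
    refine ⟨(k' : ℤ), -(hbar * h), ?_⟩
    linarith [hb]
  -- m' ∣ b * s, after cancelling d
  have hms : (m' : ℤ) ∣ b * (s : ℤ) := by
    have hcast : (r : ℤ) = (d : ℤ) * s := by exact_mod_cast hs
    rcases hdiv with ⟨t, ht⟩
    refine ⟨t, ?_⟩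
    have hd0' : (d : ℤ) ≠ 0 := by exact_mod_cast hd0.ne'
    apply mul_left_cancel₀ hd0'
    calc (d : ℤ) * (b * s) = b * ((d : ℤ) * s) := by ring
    _ = b * r := by rw [← hcast]
    _ = d * m' * t := ht
    _ = d * (m' * t) := by ring
  have hm's : (m' : ℤ) ∣ (s : ℤ) := hcopbm.symm.dvd_of_dvd_mul_left hms
  have hm'sN : m' ∣ s := by exact_mod_cast hm's
  have : m ∣ r := by
    rw [hm', hs]
    exact mul_dvd_mul_left d hm'sN
  have := Nat.le_of_dvd (by omega) this
  omega
end

section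
/- For all integers n ≥ 161, (1/10)·(4π/5)·cos(π/5)·(5n-1)^{-1/2}·e^{(4π/5)√(5n-1)} / √((4π/5)√(5n-1)) > (2e^{54} + e^{8π} + 185)·e² + (2π^{5/4}/5)·e^{(2π/5)√(5n-1)}·(5n-1)^{1/2}. -/
/-!
Write `x = √(5n - 1) ≥ 28`. The right-hand side is at least `e^{(4π/5 - 1/10) x} / 4000`, since its
coefficient is at least `1/5` and `x √(4πx/5) ≤ 800 e^{x/10}`. The left-hand side is at most
`3 e^{56} + 80 e^{(2π/5 + 1/20) x}`, using `x ≤ 20 e^{x/20}`. For `x ≥ 28` the exponent on the right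
beats `56` by more than `11` and `(2π/5 + 1/20) x` by more than `14`, and `e^{11}`, `e^{14}` absorb
the numerical constants.
-/

open Real

lemma le_mul_exp_div (x : ℝ) {k : ℝ} (hk : 0 < k) : x ≤ k * exp (x / k) := by
  have h := mul_le_mul_of_nonneg_left (add_one_le_exp (x / k)) hk.le
  rw [mul_add, mul_div_cancel₀ x hk.ne'] at h
  linarith

lemma mul_sqrt_mul_le_exp {a x : ℝ} (ha : a ≤ 4) (hx : 1 ≤ x) :
    x * √(a * x) ≤ 800 * exp (x / 10) := by
  have hsqrt : √(a * x) ≤ 2 * x := by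
    rw [show 2 * x = √((2 * x) ^ 2) from (sqrt_sq (by linarith)).symm]
    exact sqrt_le_sqrt (by nlinarith)
  have hlin : x ≤ 20 * exp (x / 20) := le_mul_exp_div x (by norm_num)
  calc x * √(a * x) ≤ 2 * x ^ 2 := by nlinarith
    _ ≤ 2 * (20 * exp (x / 20)) ^ 2 := by gcongr
    _ = 800 * exp (x / 10) := by rw [mul_pow, ← exp_nat_mul]; ring_nf

lemma mul_exp_lt_exp {c d u v : ℝ} (hc : c < exp d) (huv : u + d ≤ v) : c * exp u < exp v :=
  calc c * exp u < exp d * exp u := mul_lt_mul_of_pos_right hc (exp_pos u)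
    _ = exp (u + d) := by rw [exp_add, mul_comm]
    _ ≤ exp v := exp_le_exp.mpr huv

lemma pow_le_exp_natCast (k : ℕ) : (2.7 : ℝ) ^ k ≤ exp k := by
  rw [← exp_one_pow]
  exact pow_le_pow_left₀ (by norm_num) (by linarith [exp_one_gt_d9]) k

lemma four_fifths_le_cos_pi_div_five : (4 / 5 : ℝ) ≤ cos (π / 5) := by
  have h : (2.2 : ℝ) ≤ √5 := (le_sqrt (by norm_num) (by norm_num)).mpr (by norm_num)
  rw [cos_pi_div_five]
  linarith

lemma pi_rpow_five_div_four_le : π ^ ((5 : ℝ) / 4) ≤ 10 := by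
  have h : π ^ ((5 : ℝ) / 4) ≤ π ^ (2 : ℝ) :=
    rpow_le_rpow_of_exponent_le (by linarith [pi_gt_three]) (by norm_num)
  rw [rpow_two] at h
  nlinarith [pi_lt_d2, pi_pos]

lemma constant_term_le : (2 * exp 54 + exp (8 * π) + 185) * exp 2 ≤ 3 * exp 56 := by
  have h185 : (185 : ℝ) ≤ exp 26 := by
    have := pow_le_exp_natCast 26
    norm_num at this
    linarith
  have h8π : exp (8 * π) ≤ exp 26 := exp_le_exp.mpr (by linarith [pi_lt_d2])
  have htwo : 2 * exp 26 < exp 54 :=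
    mul_exp_lt_exp (d := 1) (by linarith [exp_one_gt_d9]) (by norm_num)
  have hsum : 2 * exp 54 + exp (8 * π) + 185 ≤ 3 * exp 54 := by linarith
  calc (2 * exp 54 + exp (8 * π) + 185) * exp 2 ≤ 3 * exp 54 * exp 2 := by gcongr
    _ = 3 * exp 56 := by rw [mul_assoc, ← exp_add]; norm_num

lemma error_term_le {x : ℝ} (hx : 0 ≤ x) :
    (2 * π ^ ((5 : ℝ) / 4) / 5) * exp ((2 * π / 5) * x) * x
      ≤ 80 * exp ((2 * π / 5 + 1 / 20) * x) := by
  have hlin : x ≤ 20 * exp (x / 20) := le_mul_exp_div x (by norm_num)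
  calc (2 * π ^ ((5 : ℝ) / 4) / 5) * exp ((2 * π / 5) * x) * x
      ≤ 4 * exp ((2 * π / 5) * x) * (20 * exp (x / 20)) := by
        gcongr; linarith [pi_rpow_five_div_four_le]
    _ = 80 * exp ((2 * π / 5 + 1 / 20) * x) := by rw [add_mul, exp_add]; ring_nf

lemma exp_div_le_main_term {x : ℝ} (hx : 1 ≤ x) :
    exp ((4 * π / 5 - 1 / 10) * x) / 4000
      ≤ (1 / 10) * ((4 * π / 5) * cos (π / 5)) * (1 / x) *
          (exp ((4 * π / 5) * x) / √((4 * π / 5) * x)) := by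
  have hcoeff : 1 / 5 ≤ (1 / 10) * ((4 * π / 5) * cos (π / 5)) := by
    nlinarith [four_fifths_le_cos_pi_div_five, pi_gt_d2]
  have hden : x * √((4 * π / 5) * x) ≤ 800 * exp (x / 10) :=
    mul_sqrt_mul_le_exp (by linarith [pi_lt_d2]) hx
  have hden0 : 0 < x * √((4 * π / 5) * x) :=
    mul_pos (by linarith) (sqrt_pos.mpr (by positivity))
  rw [show (1 / 10) * ((4 * π / 5) * cos (π / 5)) * (1 / x) *
        (exp ((4 * π / 5) * x) / √((4 * π / 5) * x))
      = (1 / 10) * ((4 * π / 5) * cos (π / 5)) * exp ((4 * π / 5) * x)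
        / (x * √((4 * π / 5) * x)) by field_simp]
  calc exp ((4 * π / 5 - 1 / 10) * x) / 4000
      = 1 / 5 * exp ((4 * π / 5) * x) / (800 * exp (x / 10)) := by
        rw [sub_mul, exp_sub]; field_simp; ring_nf
    _ ≤ _ := by gcongr

theorem main_term_dominates_of_le {x : ℝ} (hx : 28 ≤ x) :
    (2 * exp 54 + exp (8 * π) + 185) * exp 2 +
        (2 * π ^ ((5 : ℝ) / 4) / 5) * exp ((2 * π / 5) * x) * x
      < (1 / 10) * ((4 * π / 5) * cos (π / 5)) * (1 / x) *
          (exp ((4 * π / 5) * x) / √((4 * π / 5) * x)) := by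
  have hπ : 3.14 < π := pi_gt_d2
  have hconst : 3 * exp 56 < exp ((4 * π / 5 - 1 / 10) * x) / 8000 := by
    have h := pow_le_exp_natCast 11
    rw [lt_div_iff₀ (by norm_num), mul_comm, ← mul_assoc]
    exact mul_exp_lt_exp (by norm_num at h ⊢; linarith) (by nlinarith)
  have herror : 80 * exp ((2 * π / 5 + 1 / 20) * x) < exp ((4 * π / 5 - 1 / 10) * x) / 8000 := by
    have h := pow_le_exp_natCast 14
    rw [lt_div_iff₀ (by norm_num), mul_comm, ← mul_assoc]
    exact mul_exp_lt_exp (by norm_num at h ⊢; linarith) (by nlinarith)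
  linarith [constant_term_le, error_term_le (x := x) (by linarith),
    exp_div_le_main_term (x := x) (by linarith)]

theorem main_term_dominates (n : ℕ) (hn : 161 ≤ n) :
    (2 * Real.exp 54 + Real.exp (8 * π) + 185) * Real.exp 2 +
        (2 * π ^ ((5 : ℝ) / 4) / 5) * Real.exp ((2 * π / 5) * Real.sqrt (5 * n - 1)) *
          Real.sqrt (5 * n - 1)
      < (1 / 10) * ((4 * π / 5) * Real.cos (π / 5)) * (1 / Real.sqrt (5 * n - 1)) *
          (Real.exp ((4 * π / 5) * Real.sqrt (5 * n - 1)) /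
            Real.sqrt ((4 * π / 5) * Real.sqrt (5 * n - 1))) := by
  have hn' : (161 : ℝ) ≤ n := by exact_mod_cast hn
  have hx : (28 : ℝ) ≤ √(5 * n - 1) := (le_sqrt (by norm_num) (by linarith)).mpr (by linarith)
  exact main_term_dominates_of_le hx
end
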